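/- For every integer ℓ ≥ 1 there is a constant C (depending only on ℓ) such that for any probability vector μ on {1,…,d} with all entries positive, any i ∈ {1,…,d} and any N ≥ 1: |E[(S[i]/(N μ[i]))^ℓ − 1]| ≤ ℓ(ℓ−1)/(2N μ[i]) + C Σ_{k=3}^{ℓ} N^{−k/2} μ[i]^{−(k−1)}, where S is multinomial with parameters N and μ (the sum from k=3 to ℓ is empty when ℓ ≤ 2). -/

import Mathlib

/-!
Expanding `(S/(Np))^ℓ = (1 + (S - Np)/(Np))^ℓ` reduces the claim to bounds on the central moments
`M_k = E[(S - Np)^k]` of the binomial marginal `S`. Writing `S - Np` as a sum of `N` independent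
centred Bernoulli variables, `M_k` is a sum over maps `f : Fin k → Fin N` of products of Bernoulli
central moments indexed by the fibres of `f`. A map with a one-point fibre contributes `0`; every
other map takes at most `k/2` values, so there are at most `N^(k/2) (k/2)^k` of them, and each
contributes at most `p` in absolute value. Hence `M_1 = 0`, `|M_2| ≤ Np` and
`|M_k| ≤ (k/2)^k N^(k/2) p`, which give the three parts of the bound.
-/

open Finset

/-- Expectation of `f` of a multinomial random vector with parameters `N` and `μ`. -/
noncomputable def multinomialExp (d N : ℕ) (μ : Fin d → ℝ) (f : (Fin d → ℕ) → ℝ) : ℝ :=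
  ∑ k ∈ Finset.Nat.antidiagonalTuple d N,
    ((Nat.multinomial Finset.univ k : ℝ) * ∏ i, μ i ^ k i) * f k

lemma prod_comp_eq_prod_pow_card_fiber {ι κ M : Type*} [Fintype ι] [Fintype κ] [DecidableEq κ]
    [CommMonoid M] (f : ι → κ) (x : κ → M) :
    ∏ a, x (f a) = ∏ t, x t ^ #{a | f a = t} := by
  rw [← prod_fiberwise' univ f x]
  simp only [prod_const]

lemma add_one_pow_sub_one {R : Type*} [CommRing R] (y : R) (ℓ : ℕ) :
    (y + 1) ^ ℓ - 1 = ∑ k ∈ Icc 1 ℓ, (ℓ.choose k : R) * y ^ k := by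
  rw [add_pow, sum_range_succ', ← Ico_add_one_right_eq_Icc, sum_Ico_eq_sum_range,
    Nat.add_sub_cancel]
  simp only [one_pow, mul_one, pow_zero, Nat.choose_zero_right, Nat.cast_one, add_sub_cancel_right]
  exact sum_congr rfl fun k _ => by rw [add_comm 1 k, mul_comm]

lemma pow_half_mul_rpow_half_le {x : ℝ} (hx : 1 ≤ x) (k : ℕ) :
    x ^ (k / 2) * x ^ ((k : ℝ) / 2) ≤ x ^ k := by
  have hk : ((k / 2 : ℕ) : ℝ) ≤ (k : ℝ) / 2 := Nat.cast_div_le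
  calc x ^ (k / 2) * x ^ ((k : ℝ) / 2) ≤ x ^ ((k : ℝ) / 2) * x ^ ((k : ℝ) / 2) := by
        gcongr
        rw [← Real.rpow_natCast]
        exact Real.rpow_le_rpow_of_exponent_le hx hk
    _ = x ^ k := by
        rw [← Real.rpow_add (by linarith), add_halves, Real.rpow_natCast]

section FiberCounting

variable {α β : Type*} [Fintype α] [DecidableEq β]

lemma two_mul_card_image_le {f : α → β} (hf : ∀ b, #{a | f a = b} ≠ 1) :
    2 * #(univ.image f) ≤ Fintype.card α := by
  have hfib : ∀ b ∈ univ.image f, 2 ≤ #{a | f a = b} := by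
    intro b hb
    obtain ⟨a, -, rfl⟩ := mem_image.1 hb
    have : 0 < #{x | f x = f a} := card_pos.2 ⟨a, by simp⟩
    have := hf (f a)
    omega
  calc 2 * #(univ.image f) = ∑ _b ∈ univ.image f, 2 := by rw [sum_const, smul_eq_mul, mul_comm]
    _ ≤ ∑ b ∈ univ.image f, #{a | f a = b} := sum_le_sum hfib
    _ = Fintype.card α :=
      (card_eq_sum_card_fiberwise fun a _ => mem_image_of_mem f (mem_univ a)).symm

variable [DecidableEq α] [Fintype β]

lemma card_filter_card_image_le_le {m : ℕ} (hm : m ≤ Fintype.card β) :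
    #{f : α → β | #(univ.image f) ≤ m} ≤ (Fintype.card β).choose m * m ^ Fintype.card α := by
  have hsub : ({f : α → β | #(univ.image f) ≤ m} : Finset (α → β)) ⊆
      (powersetCard m univ).biUnion fun s => Fintype.piFinset fun _ => s := by
    intro f hf
    obtain ⟨s, hfs, hs⟩ := exists_superset_card_eq (mem_filter.1 hf).2 (by simpa using hm)
    exact mem_biUnion.2 ⟨s, mem_powersetCard.2 ⟨subset_univ s, hs⟩,
      Fintype.mem_piFinset.2 fun a => hfs (mem_image_of_mem f (mem_univ a))⟩
  calc _ ≤ _ := card_le_card hsub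
    _ ≤ ∑ s ∈ powersetCard m (univ : Finset β), #(Fintype.piFinset fun _ : α => s) :=
      card_biUnion_le
    _ = (Fintype.card β).choose m * m ^ Fintype.card α := by
      rw [sum_congr rfl fun s hs => by
        rw [Fintype.card_piFinset, prod_const, (mem_powersetCard.1 hs).2, card_univ], sum_const,
        card_powersetCard, card_univ, smul_eq_mul]

lemma card_filter_forall_card_fiber_ne_one_le (hβ : 1 ≤ Fintype.card β) :
    #{f : α → β | ∀ b, #{a | f a = b} ≠ 1}
      ≤ Fintype.card β ^ (Fintype.card α / 2) * (Fintype.card α / 2) ^ Fintype.card α := by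
  set m := min (Fintype.card α / 2) (Fintype.card β)
  have hsub : ({f : α → β | ∀ b, #{a | f a = b} ≠ 1} : Finset (α → β))
      ⊆ ({f : α → β | #(univ.image f) ≤ m} : Finset (α → β)) := by
    intro f hf
    have := two_mul_card_image_le (mem_filter.1 hf).2
    have := card_le_univ (univ.image f)
    simp only [mem_filter, mem_univ, true_and]
    omega
  calc _ ≤ _ := card_le_card hsub
    _ ≤ (Fintype.card β).choose m * m ^ Fintype.card α :=
      card_filter_card_image_le_le (min_le_right _ _)
    _ ≤ Fintype.card β ^ m * m ^ Fintype.card α := by gcongr; exact Nat.choose_le_pow _ _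
    _ ≤ _ := by gcongr <;> omega

end FiberCounting

noncomputable def bernoulliCentralMoment (p : ℝ) (c : ℕ) : ℝ :=
  p * (1 - p) ^ c + (1 - p) * (-p) ^ c

section BernoulliCentralMoment

variable {p : ℝ}

lemma bernoulliCentralMoment_one (p : ℝ) : bernoulliCentralMoment p 1 = 0 := by
  simp only [bernoulliCentralMoment]; ring

lemma abs_bernoulliCentralMoment_le (hp0 : 0 ≤ p) (hp1 : p ≤ 1) (c : ℕ) :
    |bernoulliCentralMoment p c| ≤ p * (1 - p) ^ c + (1 - p) * p ^ c := by
  have hq : 0 ≤ 1 - p := by linarith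
  calc |bernoulliCentralMoment p c| ≤ |p * (1 - p) ^ c| + |(1 - p) * (-p) ^ c| := abs_add_le _ _
    _ = p * (1 - p) ^ c + (1 - p) * p ^ c := by
      rw [abs_mul, abs_mul, abs_pow, abs_pow, abs_neg, abs_of_nonneg hp0, abs_of_nonneg hq]

lemma abs_bernoulliCentralMoment_le_one (hp0 : 0 ≤ p) (hp1 : p ≤ 1) (c : ℕ) :
    |bernoulliCentralMoment p c| ≤ 1 := by
  have h₁ : (1 - p) ^ c ≤ 1 := pow_le_one₀ (by linarith) (by linarith)
  have h₂ : p ^ c ≤ 1 := pow_le_one₀ hp0 hp1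
  nlinarith [abs_bernoulliCentralMoment_le hp0 hp1 c]

lemma abs_bernoulliCentralMoment_le_self (hp0 : 0 ≤ p) (hp1 : p ≤ 1) {c : ℕ} (hc : 2 ≤ c) :
    |bernoulliCentralMoment p c| ≤ p := by
  have h₁ : (1 - p) ^ c ≤ (1 - p) ^ 2 := pow_le_pow_of_le_one (by linarith) (by linarith) hc
  have h₂ : p ^ c ≤ p ^ 2 := pow_le_pow_of_le_one hp0 hp1 hc
  nlinarith [abs_bernoulliCentralMoment_le hp0 hp1 c]

variable {ι : Type*} [Fintype ι]

lemma prod_bernoulliCentralMoment_eq_zero {c : ι → ℕ} {t : ι} (ht : c t = 1) :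
    ∏ s, bernoulliCentralMoment p (c s) = 0 :=
  prod_eq_zero (mem_univ t) (by rw [ht, bernoulliCentralMoment_one])

lemma abs_prod_bernoulliCentralMoment_le (hp0 : 0 ≤ p) (hp1 : p ≤ 1) {c : ι → ℕ} {t : ι}
    (ht : 2 ≤ c t) : |∏ s, bernoulliCentralMoment p (c s)| ≤ p := by
  classical
  rw [abs_prod, ← mul_prod_erase _ _ (mem_univ t)]
  have hrest : ∏ s ∈ univ.erase t, |bernoulliCentralMoment p (c s)| ≤ 1 :=
    prod_le_one (fun _ _ => abs_nonneg _) fun s _ => abs_bernoulliCentralMoment_le_one hp0 hp1 _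
  simpa using mul_le_mul (abs_bernoulliCentralMoment_le_self hp0 hp1 ht) hrest
    (prod_nonneg fun _ _ => abs_nonneg _) hp0

lemma abs_sum_prod_bernoulliCentralMoment_le {α : Type*} [Fintype α] [DecidableEq α] [Nonempty α]
    [DecidableEq ι]
    (hp0 : 0 ≤ p) (hp1 : p ≤ 1) :
    |∑ f : α → ι, ∏ t, bernoulliCentralMoment p #{a | f a = t}|
      ≤ #{f : α → ι | ∀ t, #{a | f a = t} ≠ 1} * p := by
  obtain ⟨a₀⟩ := ‹Nonempty α›
  calc _ ≤ ∑ f : α → ι, |∏ t, bernoulliCentralMoment p #{a | f a = t}| := abs_sum_le_sum_abs _ _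
    _ = ∑ f : α → ι with ∀ t, #{a | f a = t} ≠ 1,
          |∏ t, bernoulliCentralMoment p #{a | f a = t}| := by
      refine (sum_filter_of_ne fun f _ hf t ht => hf ?_).symm
      rw [prod_bernoulliCentralMoment_eq_zero (c := fun t => #{a | f a = t}) ht, abs_zero]
    _ ≤ ∑ f : α → ι with ∀ t, #{a | f a = t} ≠ 1, p := sum_le_sum fun f hf => by
      refine abs_prod_bernoulliCentralMoment_le hp0 hp1 (t := f a₀) ?_
      have : 0 < #{a | f a = f a₀} := card_pos.2 ⟨a₀, by simp⟩
      have := (mem_filter.1 hf).2 (f a₀)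
      omega
    _ = _ := by rw [sum_const, nsmul_eq_mul]

end BernoulliCentralMoment

noncomputable def bernoulliProductWeight {ι : Type*} [Fintype ι] [DecidableEq ι] (p : ℝ)
    (s : Finset ι) : ℝ :=
  (∏ _t ∈ s, p) * ∏ _t ∈ sᶜ, (1 - p)

lemma sum_bernoulliProductWeight_mul_prod_pow {ι : Type*} [Fintype ι] [DecidableEq ι] (p : ℝ)
    (c : ι → ℕ) :
    ∑ s : Finset ι, bernoulliProductWeight p s * ∏ t, ((if t ∈ s then 1 else 0) - p) ^ c t
      = ∏ t, bernoulliCentralMoment p (c t) := by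
  simp only [bernoulliCentralMoment, Fintype.prod_add]
  refine sum_congr rfl fun s _ => ?_
  have hin : ∏ t ∈ s, ((if t ∈ s then 1 else 0) - p) ^ c t = ∏ t ∈ s, (1 - p) ^ c t :=
    prod_congr rfl fun t ht => by simp [ht]
  have hout : ∏ t ∈ sᶜ, ((if t ∈ s then 1 else 0) - p) ^ c t = ∏ t ∈ sᶜ, (-p) ^ c t :=
    prod_congr rfl fun t ht => by simp [mem_compl.1 ht]
  rw [bernoulliProductWeight, ← prod_mul_prod_compl s, hin, hout, prod_mul_distrib,
    prod_mul_distrib]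
  ring

noncomputable def binomialExp (N : ℕ) (p : ℝ) (g : ℕ → ℝ) : ℝ :=
  ∑ m ∈ range (N + 1), (N.choose m : ℝ) * p ^ m * (1 - p) ^ (N - m) * g m

noncomputable def binomialCentralMoment (N : ℕ) (p : ℝ) (k : ℕ) : ℝ :=
  binomialExp N p fun m => ((m : ℝ) - N * p) ^ k

lemma binomialExp_eq_sum_bernoulliProductWeight (N : ℕ) (p : ℝ) (g : ℕ → ℝ) :
    binomialExp N p g = ∑ s : Finset (Fin N), bernoulliProductWeight p s * g #s := by
  simp only [bernoulliProductWeight, prod_const, card_compl, Fintype.card_fin]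
  rw [← powerset_univ, sum_powerset_apply_card (fun m => p ^ m * (1 - p) ^ (N - m) * g m),
    binomialExp, card_univ, Fintype.card_fin]
  refine sum_congr rfl fun m _ => ?_
  rw [nsmul_eq_mul]
  ring

lemma binomialExp_sum_mul {ι : Type*} (N : ℕ) (p : ℝ) (s : Finset ι) (c : ι → ℝ)
    (h : ι → ℕ → ℝ) :
    binomialExp N p (fun m => ∑ k ∈ s, c k * h k m) = ∑ k ∈ s, c k * binomialExp N p (h k) := by
  simp only [binomialExp, mul_sum]
  rw [sum_comm]
  exact sum_congr rfl fun k _ => sum_congr rfl fun m _ => by ring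

lemma binomialCentralMoment_eq_sum_prod (N : ℕ) (p : ℝ) (k : ℕ) :
    binomialCentralMoment N p k
      = ∑ f : Fin k → Fin N, ∏ t, bernoulliCentralMoment p #{a | f a = t} := by
  have hcentered : ∀ s : Finset (Fin N),
      (#s : ℝ) - N * p = ∑ t, ((if t ∈ s then 1 else 0) - p) := fun s => by
    simp [sum_sub_distrib]
  simp only [binomialCentralMoment, binomialExp_eq_sum_bernoulliProductWeight, hcentered,
    Fintype.sum_pow, mul_sum]
  rw [sum_comm]
  refine sum_congr rfl fun f _ => ?_
  rw [← sum_bernoulliProductWeight_mul_prod_pow]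
  exact sum_congr rfl fun s _ => congrArg (bernoulliProductWeight p s * ·)
    (prod_comp_eq_prod_pow_card_fiber f fun t => (if t ∈ s then 1 else 0) - p)

lemma binomialCentralMoment_one (N : ℕ) (p : ℝ) : binomialCentralMoment N p 1 = 0 := by
  rw [binomialCentralMoment_eq_sum_prod]
  exact sum_eq_zero fun f _ =>
    prod_bernoulliCentralMoment_eq_zero (t := f 0) (by simp [Fin.fin_one_eq_zero])

lemma abs_binomialCentralMoment_le {N k : ℕ} (hN : 1 ≤ N) (hk : 1 ≤ k) {p : ℝ} (hp0 : 0 ≤ p)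
    (hp1 : p ≤ 1) :
    |binomialCentralMoment N p k| ≤ ((k / 2 : ℕ) : ℝ) ^ k * (N : ℝ) ^ (k / 2) * p := by
  have : Nonempty (Fin k) := ⟨⟨0, hk⟩⟩
  have hcard := card_filter_forall_card_fiber_ne_one_le (α := Fin k) (β := Fin N)
    (by rwa [Fintype.card_fin])
  rw [Fintype.card_fin, Fintype.card_fin, mul_comm] at hcard
  rw [binomialCentralMoment_eq_sum_prod]
  refine (abs_sum_prod_bernoulliCentralMoment_le (α := Fin k) (ι := Fin N) hp0 hp1).trans ?_
  gcongr
  exact_mod_cast hcard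

lemma binomialExp_div_pow_sub_one {N : ℕ} {p : ℝ} (hNp : (N : ℝ) * p ≠ 0) (ℓ : ℕ) :
    binomialExp N p (fun m => ((m : ℝ) / (N * p)) ^ ℓ - 1)
      = ∑ k ∈ Icc 1 ℓ, (ℓ.choose k : ℝ) * ((N * p)⁻¹) ^ k * binomialCentralMoment N p k := by
  have hexpand : ∀ x : ℝ, (x / (N * p)) ^ ℓ - 1
      = ∑ k ∈ Icc 1 ℓ, (ℓ.choose k : ℝ) * ((N * p)⁻¹) ^ k * (x - N * p) ^ k := fun x => by
    rw [show x / (N * p) = (x - N * p) * (N * p)⁻¹ + 1 by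
      rw [sub_mul, mul_inv_cancel₀ hNp, sub_add_cancel, div_eq_mul_inv], add_one_pow_sub_one]
    exact sum_congr rfl fun k _ => by rw [mul_pow]; ring
  simp only [hexpand]
  exact binomialExp_sum_mul N p _ (fun k => (ℓ.choose k : ℝ) * ((N * p)⁻¹) ^ k)
    fun k m => ((m : ℝ) - N * p) ^ k

section Marginal

open Polynomial

lemma coeff_sum_C_mul_X_pow {R ι : Type*} [Semiring R] (s : Finset ι) (a : ι → R) (e : ι → ℕ)
    (m : ℕ) : (∑ x ∈ s, C (a x) * X ^ e x).coeff m = ∑ x ∈ s with e x = m, a x := by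
  simp [finsetSum_coeff, sum_filter, eq_comm]

lemma C_mul_X_add_C_pow {R : Type*} [CommSemiring R] (a b : R) (N : ℕ) :
    (C a * X + C b) ^ N
      = ∑ r ∈ range (N + 1), C ((N.choose r : R) * a ^ r * b ^ (N - r)) * X ^ r := by
  rw [add_pow]
  refine sum_congr rfl fun r _ => ?_
  simp only [map_mul, map_pow, map_natCast, mul_pow]
  ring

variable {d N : ℕ} {μ : Fin d → ℝ}

lemma sum_multinomial_mul_X_pow_apply (hμ : ∑ j, μ j = 1) (i : Fin d) :
    ∑ k ∈ Nat.antidiagonalTuple d N, C ((Nat.multinomial univ k : ℝ) * ∏ j, μ j ^ k j) * X ^ k i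
      = (C (μ i) * X + C (1 - μ i)) ^ N := by
  have hsplit : ∑ j, C (μ j) * X ^ (if j = i then 1 else 0) = C (μ i) * X + C (1 - μ i) := by
    have hrest : ∑ j ∈ univ.erase i, μ j = 1 - μ i := by
      rw [← hμ, ← add_sum_erase _ _ (mem_univ i)]; ring
    rw [← add_sum_erase _ _ (mem_univ i), if_pos rfl, pow_one, ← hrest, map_sum]
    exact congrArg _ (sum_congr rfl fun j hj => by
      rw [if_neg (ne_of_mem_erase hj), pow_zero, mul_one])
  rw [← hsplit, sum_pow_eq_sum_piAntidiag, piAntidiag_univ_fin_eq_antidiagonalTuple]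
  refine sum_congr rfl fun k _ => ?_
  simp only [mul_pow, prod_mul_distrib, ← pow_mul, prod_pow_eq_pow_sum, ← map_pow, ← map_prod]
  simp only [ite_mul, one_mul, zero_mul, sum_ite_eq', mem_univ, if_true, map_mul, map_natCast]
  ring

lemma multinomialExp_apply_eq_binomialExp (hμ : ∑ j, μ j = 1) (i : Fin d) (g : ℕ → ℝ) :
    multinomialExp d N μ (fun k => g (k i)) = binomialExp N (μ i) g := by
  have hmaps : ∀ k ∈ Nat.antidiagonalTuple d N, k i ∈ range (N + 1) := fun k hk => by
    rw [Nat.mem_antidiagonalTuple] at hk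
    exact mem_range_succ_iff.2 (hk ▸ single_le_sum (fun j _ => Nat.zero_le (k j)) (mem_univ i))
  have hfiber : ∀ m ∈ range (N + 1),
      ∑ k ∈ Nat.antidiagonalTuple d N with k i = m, (Nat.multinomial univ k : ℝ) * ∏ j, μ j ^ k j
        = N.choose m * μ i ^ m * (1 - μ i) ^ (N - m) := fun m hm => by
    have := congrArg (coeff · m) (sum_multinomial_mul_X_pow_apply (N := N) hμ i)
    rwa [coeff_sum_C_mul_X_pow, C_mul_X_add_C_pow, coeff_sum_C_mul_X_pow, filter_eq', if_pos hm,
      sum_singleton] at this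
  rw [multinomialExp, binomialExp, ← sum_fiberwise_of_maps_to hmaps]
  refine sum_congr rfl fun m hm => ?_
  rw [← hfiber m hm, sum_mul]
  exact sum_congr rfl fun k hk => by rw [(mem_filter.1 hk).2]

end Marginal

section TermBounds

variable {N : ℕ} {p : ℝ}

lemma abs_choose_two_mul_binomialCentralMoment_le (hN : 1 ≤ N) (hp0 : 0 < p) (hp1 : p ≤ 1)
    (ℓ : ℕ) :
    |(ℓ.choose 2 : ℝ) * ((N * p)⁻¹) ^ 2 * binomialCentralMoment N p 2|
      ≤ ℓ * (ℓ - 1) / (2 * N * p) := by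
  have hM : |binomialCentralMoment N p 2| ≤ N * p := by
    simpa using abs_binomialCentralMoment_le (k := 2) hN (by norm_num) hp0.le hp1
  have hN0 : (0 : ℝ) < N := by exact_mod_cast hN
  calc |(ℓ.choose 2 : ℝ) * ((N * p)⁻¹) ^ 2 * binomialCentralMoment N p 2|
      = (ℓ.choose 2 : ℝ) * ((N * p)⁻¹) ^ 2 * |binomialCentralMoment N p 2| := by
        rw [abs_mul, abs_of_nonneg (by positivity)]
    _ ≤ (ℓ.choose 2 : ℝ) * ((N * p)⁻¹) ^ 2 * (N * p) := by gcongr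
    _ = ℓ * (ℓ - 1) / (2 * N * p) := by
        rw [Nat.cast_choose_two]
        field_simp

lemma abs_choose_mul_binomialCentralMoment_le (hN : 1 ≤ N) (hp0 : 0 < p) (hp1 : p ≤ 1)
    {k ℓ : ℕ} (hk : 1 ≤ k) (hkℓ : k ≤ ℓ) :
    |(ℓ.choose k : ℝ) * ((N * p)⁻¹) ^ k * binomialCentralMoment N p k|
      ≤ 2 ^ ℓ * ℓ ^ ℓ * (((N : ℝ) ^ ((k : ℝ) / 2))⁻¹ * (p ^ (k - 1))⁻¹) := by
  have hN1 : (1 : ℝ) ≤ N := by exact_mod_cast hN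
  have hcoeff : (ℓ.choose k : ℝ) * ((k / 2 : ℕ) : ℝ) ^ k ≤ 2 ^ ℓ * ℓ ^ ℓ := by
    have : ℓ.choose k * (k / 2) ^ k ≤ 2 ^ ℓ * ℓ ^ ℓ :=
      Nat.mul_le_mul (Nat.choose_le_two_pow ℓ k)
        ((Nat.pow_le_pow_left (by omega) k).trans (Nat.pow_le_pow_right (by omega) hkℓ))
    exact_mod_cast this
  have hNpow : (N : ℝ) ^ (k / 2) / N ^ k ≤ ((N : ℝ) ^ ((k : ℝ) / 2))⁻¹ := by
    rw [div_le_iff₀ (by positivity), inv_mul_eq_div, le_div_iff₀ (by positivity)]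
    exact pow_half_mul_rpow_half_le hN1 k
  have hppow : p / p ^ k = (p ^ (k - 1))⁻¹ := by
    rw [← Nat.sub_add_cancel hk, pow_succ, Nat.add_sub_cancel, div_mul_cancel_right₀ hp0.ne']
  calc |(ℓ.choose k : ℝ) * ((N * p)⁻¹) ^ k * binomialCentralMoment N p k|
      = (ℓ.choose k : ℝ) * ((N * p)⁻¹) ^ k * |binomialCentralMoment N p k| := by
        rw [abs_mul, abs_of_nonneg (by positivity)]
    _ ≤ (ℓ.choose k : ℝ) * ((N * p)⁻¹) ^ k * (((k / 2 : ℕ) : ℝ) ^ k * (N : ℝ) ^ (k / 2) * p) := by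
        gcongr
        exact abs_binomialCentralMoment_le hN hk hp0.le hp1
    _ = ((ℓ.choose k : ℝ) * ((k / 2 : ℕ) : ℝ) ^ k) * ((N : ℝ) ^ (k / 2) / N ^ k) * (p / p ^ k) := by
        rw [mul_inv, mul_pow, inv_pow, inv_pow]
        ring
    _ ≤ 2 ^ ℓ * ℓ ^ ℓ * (((N : ℝ) ^ ((k : ℝ) / 2))⁻¹ * (p ^ (k - 1))⁻¹) := by
        rw [hppow, ← mul_assoc]
        gcongr

end TermBounds

theorem multinomial_ratio_power_mean_bound_general (ℓ : ℕ) :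
    ∃ C : ℝ, ∀ (d N : ℕ), 1 ≤ N → ∀ (μ : Fin d → ℝ),
      (∀ j, 0 < μ j) → (∑ j, μ j = 1) → ∀ i : Fin d,
      |multinomialExp d N μ (fun k => ((k i : ℝ) / (N * μ i)) ^ ℓ - 1)|
        ≤ (ℓ : ℝ) * ((ℓ : ℝ) - 1) / (2 * N * μ i)
          + C * ∑ k ∈ Finset.Icc 3 ℓ,
              ((N : ℝ) ^ ((k : ℝ) / 2))⁻¹ * (μ i ^ (k - 1))⁻¹ := by
  refine ⟨2 ^ ℓ * ℓ ^ ℓ, fun d N hN μ hμ hμ1 i => ?_⟩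
  have hp0 : 0 < μ i := hμ i
  have hp1 : μ i ≤ 1 := hμ1 ▸ single_le_sum (fun j _ => (hμ j).le) (mem_univ i)
  set T : ℕ → ℝ := fun k => |(ℓ.choose k : ℝ) * ((N * μ i)⁻¹) ^ k * binomialCentralMoment N (μ i) k|
  rw [multinomialExp_apply_eq_binomialExp hμ1 i fun m => ((m : ℝ) / (N * μ i)) ^ ℓ - 1,
    binomialExp_div_pow_sub_one (by positivity)]
  calc _ ≤ ∑ k ∈ Icc 1 ℓ, T k := abs_sum_le_sum_abs _ _
    _ ≤ ∑ k ∈ insert 1 (insert 2 (Icc 3 ℓ)), T k :=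
        sum_le_sum_of_subset_of_nonneg (fun k hk => by simp at hk ⊢; omega)
          fun k _ _ => abs_nonneg _
    _ = T 2 + ∑ k ∈ Icc 3 ℓ, T k := by
        rw [sum_insert (by simp), sum_insert (by simp)]
        simp [T, binomialCentralMoment_one]
    _ ≤ _ := add_le_add (abs_choose_two_mul_binomialCentralMoment_le hN hp0 hp1 ℓ) <| by
        rw [mul_sum]
        exact sum_le_sum fun k hk => abs_choose_mul_binomialCentralMoment_le hN hp0 hp1
          (by simp at hk; omega) (mem_Icc.1 hk).2

/-- `|E[(S[i]/(Nμ[i]))^ℓ − 1]| ≤ ℓ(ℓ−1)/(2Nμ[i]) + C Σ_{k=3}^ℓ N^{−k/2} μ[i]^{−(k−1)}`. -/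
theorem multinomial_ratio_power_mean_bound (ℓ : ℕ) (hℓ : 1 ≤ ℓ) :
    ∃ C : ℝ, ∀ (d N : ℕ), 1 ≤ N → ∀ (μ : Fin d → ℝ),
      (∀ j, 0 < μ j) → (∑ j, μ j = 1) → ∀ i : Fin d,
      |multinomialExp d N μ (fun k => ((k i : ℝ) / (N * μ i)) ^ ℓ - 1)|
        ≤ (ℓ : ℝ) * ((ℓ : ℝ) - 1) / (2 * N * μ i)
          + C * ∑ k ∈ Finset.Icc 3 ℓ,
              ((N : ℝ) ^ ((k : ℝ) / 2))⁻¹ * (μ i ^ (k - 1))⁻¹ :=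
  multinomial_ratio_power_mean_bound_general ℓ
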